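/- arXiv:1412.5213 — 2 statements merged into one kernel-verified Lean document; each statement's English description precedes it below -/
import Mathlib

section
/- Let n ≥ 2, 1 ≤ k < n, let i ≠ j be indices in Fin n, and let o : Fin n → Bool be an outcome with o i ≠ o j such that exactly k − 1 of the indices l ∉ {i,j} satisfy o l = false. Then the amplitude of o in the context measuring X at sites i and j and Z at all other sites is zero: ⟨⊗_l v_l (o l), S(n,k)⟩ = 0, where v_i = v_j = x (the X-eigenvector family) and v_l = e (the Z-eigenvector family) for l ∉ {i,j}. -/
noncomputable section

/-- Inner product of two `n`-qubit states `(Fin n → Bool) → ℂ`. -/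
def inner' {n : ℕ} (φ ψ : (Fin n → Bool) → ℂ) : ℂ :=
  ∑ s : Fin n → Bool, (starRingEnd ℂ) (φ s) * ψ s

/-- Tensor product of local vectors. -/
def tensor {n : ℕ} (v : Fin n → Bool → ℂ) : (Fin n → Bool) → ℂ :=
  fun s => ∏ i, v i (s i)

/-- `X`-measurement eigenvectors. -/
def xvec (b : Bool) : Bool → ℂ :=
  fun b' => if b' && b then -(Real.sqrt 2 : ℂ)⁻¹ else (Real.sqrt 2 : ℂ)⁻¹

/-- `Z`-measurement eigenvectors. -/
def evec (b : Bool) : Bool → ℂ := fun b' => if b = b' then 1 else 0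

/-- The Dicke state `S(n,k)`. -/
def dicke (n k : ℕ) : (Fin n → Bool) → ℂ :=
  fun s => if (Finset.univ.filter fun i => s i = false).card = k
    then (Real.sqrt (n.choose k) : ℂ)⁻¹ else 0

/-- In the context measuring `X` at `i ≠ j` and `Z` elsewhere, any outcome `o`
with `o i ≠ o j` whose `Z`-part has exactly `k-1` `false`s has zero amplitude
against the Dicke state `S(n,k)`. -/
theorem dicke_xxz_amplitude_zero (n k : ℕ) (hn : 2 ≤ n) (hk : 1 ≤ k) (hkn : k < n)
    (i j : Fin n) (hij : i ≠ j) (o : Fin n → Bool) (ho : o i ≠ o j)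
    (hcount : (Finset.univ.filter fun l => l ≠ i ∧ l ≠ j ∧ o l = false).card = k - 1) :
    inner' (tensor fun l => if l = i ∨ l = j then xvec (o l) else evec (o l))
      (dicke n k) = 0 := by
  classical
  unfold inner'
  set V : Fin n → Bool → ℂ := fun l => if l = i ∨ l = j then xvec (o l) else evec (o l) with hV
  set f : (Fin n → Bool) → ℂ := fun s => (starRingEnd ℂ) (tensor V s) * dicke n k s with hf
  set g : (Fin n → Bool) → (Fin n → Bool) :=
    fun s l => if l = i then s j else if l = j then s i else s l with hg
  have hgi : ∀ s, g s i = s j := by intro s; simp [hg]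
  have hgj : ∀ s, g s j = s i := by intro s; simp [hg, hij.symm]
  have hgl : ∀ s l, l ≠ i → l ≠ j → g s l = s l := by
    intro s l h1 h2; simp [hg, h1, h2]
  have hgg : ∀ s, g (g s) = s := by
    intro s; funext l
    by_cases hli : l = i
    · subst hli; rw [hgi, hgj]
    · by_cases hlj : l = j
      · subst hlj; rw [hgj, hgi]
      · rw [hgl _ _ hli hlj, hgl _ _ hli hlj]
  -- card computation
  have cardkey : ∀ s : Fin n → Bool, (∀ l, l ≠ i → l ≠ j → s l = o l) →
      (Finset.univ.filter fun l => s l = false).card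
        = (k - 1) + ((if s i = false then 1 else 0) + (if s j = false then 1 else 0)) := by
    intro s hs
    have h2 : (Finset.univ.filter fun l => l ≠ i ∧ l ≠ j ∧ o l = false).card
        = ∑ l : Fin n, if l ≠ i ∧ l ≠ j ∧ o l = false then 1 else 0 := by
      rw [Finset.card_filter]
    rw [Finset.card_filter]
    rw [← Finset.add_sum_erase _ _ (Finset.mem_univ i),
        ← Finset.add_sum_erase _ _ (Finset.mem_erase.2 ⟨hij.symm, Finset.mem_univ j⟩)]
    have h3 : ∑ l ∈ (Finset.univ.erase i).erase j, (if s l = false then 1 else 0)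
        = ∑ l : Fin n, if l ≠ i ∧ l ≠ j ∧ o l = false then 1 else 0 := by
      calc ∑ l ∈ (Finset.univ.erase i).erase j, (if s l = false then 1 else 0)
          = ∑ l ∈ (Finset.univ.erase i).erase j,
              (if l ≠ i ∧ l ≠ j ∧ o l = false then 1 else 0) := by
            apply Finset.sum_congr rfl
            intro l hl
            simp only [Finset.mem_erase, Finset.mem_univ, and_true] at hl
            rw [hs l hl.2 hl.1]
            simp [hl.1, hl.2]
        _ = ∑ l : Fin n, if l ≠ i ∧ l ≠ j ∧ o l = false then 1 else 0 := by
            apply Finset.sum_subset (Finset.subset_univ _)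
            intro l _ hl
            simp only [Finset.mem_erase, Finset.mem_univ, and_true, not_and, not_not] at hl
            by_cases hlj : l = j
            · simp [hlj]
            · simp [hl hlj]
    rw [h3, ← h2, hcount]
    ring
  -- tensor is zero if s disagrees with o off {i,j}
  have tz : ∀ s : Fin n → Bool, (¬ ∀ l, l ≠ i → l ≠ j → s l = o l) → tensor V s = 0 := by
    intro s hs
    push_neg at hs
    obtain ⟨l, hli, hlj, hl⟩ := hs
    apply Finset.prod_eq_zero (Finset.mem_univ l)
    simp only [hV, hli, hlj, or_self, if_false, evec]
    simp [Ne.symm hl]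
  have key0 : ∀ s : Fin n → Bool, s i = s j → f s = 0 := by
    intro s hs
    by_cases hso : ∀ l, l ≠ i → l ≠ j → s l = o l
    · have hc := cardkey s hso
      have : (Finset.univ.filter fun l => s l = false).card ≠ k := by
        rw [hc, hs]; cases s j <;> simp <;> omega
      simp [hf, dicke, this]
    · simp [hf, tz s hso]
  have hgsid : ∀ s : Fin n → Bool, s i = s j → g s = s := by
    intro s hs; funext l
    by_cases hli : l = i
    · subst hli; rw [hgi, hs]
    · by_cases hlj : l = j
      · subst hlj; rw [hgj, hs]
      · exact hgl _ _ hli hlj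
  apply Finset.sum_ninvolution g
  · -- f s + f (g s) = 0
    intro s
    show f s + f (g s) = 0
    by_cases hs : s i = s j
    · rw [hgsid s hs, key0 s hs, add_zero]
    · by_cases hso : ∀ l, l ≠ i → l ≠ j → s l = o l
      · -- main cancellation
        have hgso : ∀ l, l ≠ i → l ≠ j → g s l = o l := by
          intro l h1 h2; rw [hgl _ _ h1 h2]; exact hso l h1 h2
        have hd : dicke n k (g s) = dicke n k s := by
          unfold dicke
          rw [cardkey s hso, cardkey (g s) hgso, hgi, hgj]
          ring_nf
        have hsum : tensor V s + tensor V (g s) = 0 := by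
          unfold tensor
          rw [← Finset.mul_prod_erase _ _ (Finset.mem_univ i),
              ← Finset.mul_prod_erase _ _ (Finset.mem_erase.2 ⟨hij.symm, Finset.mem_univ j⟩),
              ← Finset.mul_prod_erase _ (fun l => V l (g s l)) (Finset.mem_univ i),
              ← Finset.mul_prod_erase _ (fun l => V l (g s l))
                (Finset.mem_erase.2 ⟨hij.symm, Finset.mem_univ j⟩)]
          have hP : ∏ l ∈ (Finset.univ.erase i).erase j, V l (g s l)
              = ∏ l ∈ (Finset.univ.erase i).erase j, V l (s l) := by
            apply Finset.prod_congr rfl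
            intro l hl
            simp only [Finset.mem_erase, Finset.mem_univ, and_true] at hl
            rw [hgl _ _ hl.2 hl.1]
          rw [hP, hgi, hgj]
          have hVi : V i = xvec (o i) := by simp [hV]
          have hVj : V j = xvec (o j) := by simp [hV]
          rw [hVi, hVj]
          have hoj : o j = !(o i) := by cases h : o i <;> cases h2 : o j <;> simp_all
          have hsj : s j = !(s i) := by cases h : s i <;> cases h2 : s j <;> simp_all
          rw [hoj, hsj]
          cases o i <;> cases s i <;> simp [xvec] <;> ring
        calc f s + f (g s)
            = (starRingEnd ℂ) (tensor V s + tensor V (g s)) * dicke n k s := by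
              simp only [hf, map_add]; rw [hd]; ring
          _ = 0 := by rw [hsum, map_zero, zero_mul]
      · have hgso : ¬ ∀ l, l ≠ i → l ≠ j → g s l = o l := by
          intro h; apply hso; intro l h1 h2; rw [← hgl s l h1 h2]; exact h l h1 h2
        simp [hf, tz s hso, tz (g s) hgso]
  · intro s hfs hgs
    exact hfs (key0 s ((congrFun hgs i).symm.trans (hgi s)).symm.symm)
  · intro s; exact Finset.mem_univ _
  · exact hgg
end
end

section
/- For every n > 2 and 0 < k < n, the empirical model of the Dicke state S(n,k) with measurements X and Z at each party is logically contextual: there exists an outcome o : Fin n → Bool that is possible in the all-X context (the amplitude ⟨⊗_i x(o i), S(n,k)⟩ is nonzero), such that for every consistent global assignment g : Fin n → M → Bool, the outcome induced at the all-X context differs from o (i.e. (fun i => g i X) ≠ o). -/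
noncomputable section

/-- The measurement set: `X` or `Z` at each site. -/
inductive M | X | Z

/-- The eigenvector family of each measurement. -/
def mvec : M → Bool → Bool → ℂ
  | M.X => xvec
  | M.Z => evec

/-! ### Auxiliary machinery -/

open Finset

/-- The set of `false` coordinates. -/
def fset {n : ℕ} (s : Fin n → Bool) : Finset (Fin n) := Finset.univ.filter fun i => s i = false

lemma dicke_apply {n k : ℕ} (s : Fin n → Bool) :
    dicke n k s = if (fset s).card = k then (Real.sqrt (n.choose k) : ℂ)⁻¹ else 0 := rfl

def boolEquiv (n : ℕ) : (Fin n → Bool) ≃ Finset (Fin n) where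
  toFun s := fset s
  invFun t := fun i => decide (i ∉ t)
  left_inv s := by funext i; cases h : s i <;> simp [fset, h]
  right_inv t := by ext i; simp [fset]

lemma card_count {n : ℕ} (k : ℕ) (A : Finset (Fin n)) :
    (Finset.univ.filter fun s : Fin n → Bool => (fset s).card = k ∧ fset s ⊆ A).card
      = A.card.choose k := by
  rw [← Fintype.card_subtype]
  rw [Fintype.card_congr ((boolEquiv n).subtypeEquiv (q := fun t => t ∈ powersetCard k A)
    (fun s => by simp [boolEquiv, mem_powersetCard, and_comm]))]
  rw [Fintype.card_coe, card_powersetCard]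

lemma sum_ite_card {n : ℕ} (P : (Fin n → Bool) → Prop) [DecidablePred P] (c : ℂ) :
    ∑ s : Fin n → Bool, (if P s then c else 0) = (univ.filter P).card * c := by
  rw [← Finset.sum_filter, Finset.sum_const, nsmul_eq_mul]

abbrev rr : ℂ := (Real.sqrt 2 : ℂ)⁻¹

lemma rr_ne : rr ≠ 0 := by
  simp only [rr, ne_eq, inv_eq_zero, Complex.ofReal_eq_zero]
  positivity

lemma conj_rr : (starRingEnd ℂ) rr = rr := by simp [rr]

lemma mem_fset {n : ℕ} {s : Fin n → Bool} {i : Fin n} : i ∈ fset s ↔ s i = false := by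
  simp [fset]

lemma true_iff_subset_erase {n : ℕ} (s : Fin n → Bool) (i : Fin n) (A : Finset (Fin n))
    (hA : fset s ⊆ A) : (fset s ⊆ A.erase i) ↔ s i = true := by
  rw [Finset.subset_erase]
  constructor
  · rintro ⟨-, h⟩
    cases hsi : s i
    · exact absurd (mem_fset.2 hsi) h
    · rfl
  · intro h
    refine ⟨hA, fun hm => by simp [mem_fset.1 hm] at h⟩

/-! ### Amplitudes of all-`X` contexts -/

lemma amp1 {n k : ℕ} (i0 : Fin n) :
    inner' (tensor fun i => xvec (decide (i = i0))) (dicke n k)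
      = rr^(n-1) * ((n.choose k : ℂ) * (rr * (Real.sqrt (n.choose k) : ℂ)⁻¹)
          + ((n-1).choose k : ℂ) * ((-2*rr) * (Real.sqrt (n.choose k) : ℂ)⁻¹)) := by
  set c0 : ℂ := (Real.sqrt (n.choose k) : ℂ)⁻¹ with hc0
  have hprod : ∀ s : Fin n → Bool,
      (∏ i, xvec (decide (i = i0)) (s i)) = (if s i0 = true then -rr else rr) * rr^(n-1) := by
    intro s
    rw [Finset.prod_eq_mul_prod_sdiff_singleton_of_mem (mem_univ i0)]
    have h1 : xvec (decide (i0 = i0)) (s i0) = (if s i0 = true then -rr else rr) := by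
      cases h : s i0 <;> simp [xvec, h]
    have h2 : ∀ i ∈ univ \ {i0}, xvec (decide (i = i0)) (s i) = rr := by
      intro i hi
      simp only [mem_sdiff, mem_singleton] at hi
      simp [xvec, hi.2]
    rw [h1, Finset.prod_congr rfl h2, Finset.prod_const]
    congr 2
    rw [Finset.card_sdiff_of_subset (by simp), card_univ, Fintype.card_fin, Finset.card_singleton]
  unfold inner' tensor dicke
  have hsummand : ∀ s : Fin n → Bool,
      (starRingEnd ℂ) (∏ i, xvec (decide (i = i0)) (s i)) *
        (if (Finset.univ.filter fun i => s i = false).card = k then c0 else 0)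
      = rr^(n-1) * ((if (fset s).card = k ∧ fset s ⊆ univ then rr * c0 else 0)
          + (if (fset s).card = k ∧ fset s ⊆ univ.erase i0 then (-2*rr) * c0 else 0)) := by
    intro s
    rw [hprod s]
    have hsub : fset s ⊆ univ := Finset.subset_univ _
    have htrue := true_iff_subset_erase s i0 univ hsub
    show (starRingEnd ℂ) _ * (if (fset s).card = k then c0 else 0) = _
    by_cases hc : (fset s).card = k
    · cases hsi : s i0 <;>
        simp only [hc, hsi, hsub, true_and, and_true, if_true, if_false, htrue,
          Bool.false_eq_true, Bool.true_eq_false, map_mul, map_pow, map_neg, conj_rr] <;>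
      · ring
    · simp [hc]
  rw [Finset.sum_congr rfl (fun s _ => hsummand s), ← Finset.mul_sum,
    Finset.sum_add_distrib, sum_ite_card, sum_ite_card, card_count, card_count,
    card_univ, Fintype.card_fin, Finset.card_erase_of_mem (mem_univ i0), card_univ,
    Fintype.card_fin]

lemma amp2 {n k : ℕ} (i0 i1 : Fin n) (hne : i0 ≠ i1) :
    inner' (tensor fun i => xvec (decide (i = i0) || decide (i = i1))) (dicke n k)
      = rr^(n-2) * ((n.choose k : ℂ) * (rr * rr * (Real.sqrt (n.choose k) : ℂ)⁻¹)
          + ((n-1).choose k : ℂ) * ((-2*rr*rr) * (Real.sqrt (n.choose k) : ℂ)⁻¹)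
          + ((n-1).choose k : ℂ) * ((-2*rr*rr) * (Real.sqrt (n.choose k) : ℂ)⁻¹)
          + ((n-2).choose k : ℂ) * ((4*rr*rr) * (Real.sqrt (n.choose k) : ℂ)⁻¹)) := by
  set c0 : ℂ := (Real.sqrt (n.choose k) : ℂ)⁻¹ with hc0
  set o : Fin n → Bool := fun i => decide (i = i0) || decide (i = i1) with ho
  have hprod : ∀ s : Fin n → Bool,
      (∏ i, xvec (o i) (s i))
        = (if s i0 = true then -rr else rr) * ((if s i1 = true then -rr else rr) * rr^(n-2)) := by
    intro s
    rw [Finset.prod_eq_mul_prod_sdiff_singleton_of_mem (mem_univ i0)]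
    have hi1m : i1 ∈ univ \ {i0} := by simp [hne.symm]
    rw [Finset.prod_eq_mul_prod_sdiff_singleton_of_mem hi1m]
    have h1 : xvec (o i0) (s i0) = (if s i0 = true then -rr else rr) := by
      cases h : s i0 <;> simp [xvec, o, h]
    have h1' : xvec (o i1) (s i1) = (if s i1 = true then -rr else rr) := by
      cases h : s i1 <;> simp [xvec, o, h]
    have h2 : ∀ i ∈ (univ \ {i0}) \ {i1}, xvec (o i) (s i) = rr := by
      intro i hi
      simp only [mem_sdiff, mem_singleton, mem_univ, true_and] at hi
      simp [xvec, o, hi.1, hi.2]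
    rw [h1, h1', Finset.prod_congr rfl h2, Finset.prod_const]
    congr 3
    rw [Finset.card_sdiff_of_subset (by simp [hi1m]), Finset.card_sdiff_of_subset (by simp), card_univ,
      Fintype.card_fin, Finset.card_singleton, Finset.card_singleton]
    omega
  unfold inner' tensor dicke
  have hsummand : ∀ s : Fin n → Bool,
      (starRingEnd ℂ) (∏ i, xvec (o i) (s i)) *
        (if (Finset.univ.filter fun i => s i = false).card = k then c0 else 0)
      = rr^(n-2) * ((if (fset s).card = k ∧ fset s ⊆ univ then rr * rr * c0 else 0)
          + (if (fset s).card = k ∧ fset s ⊆ univ.erase i0 then (-2*rr*rr) * c0 else 0)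
          + (if (fset s).card = k ∧ fset s ⊆ univ.erase i1 then (-2*rr*rr) * c0 else 0)
          + (if (fset s).card = k ∧ fset s ⊆ (univ.erase i0).erase i1 then (4*rr*rr) * c0 else 0)) := by
    intro s
    rw [hprod s]
    have hsub : fset s ⊆ univ := Finset.subset_univ _
    have ht0 := true_iff_subset_erase s i0 univ hsub
    have ht1 := true_iff_subset_erase s i1 univ hsub
    have ht01 : (fset s ⊆ (univ.erase i0).erase i1) ↔ (s i0 = true ∧ s i1 = true) := by
      rw [Finset.subset_erase, ht0]
      have hm1 : i1 ∉ fset s ↔ s i1 = true := by cases h : s i1 <;> simp [mem_fset, h]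
      rw [hm1]
    show (starRingEnd ℂ) _ * (if (fset s).card = k then c0 else 0) = _
    by_cases hc : (fset s).card = k
    · cases hs0 : s i0 <;> cases hs1 : s i1 <;>
        simp only [hc, hs0, hs1, hsub, true_and, and_true, if_true, if_false, ht0, ht1, ht01,
          Bool.false_eq_true, Bool.true_eq_false, and_false, false_and, map_mul, map_pow,
          map_neg, conj_rr] <;>
      · ring
    · simp [hc]
  rw [Finset.sum_congr rfl (fun s _ => hsummand s), ← Finset.mul_sum]
  rw [Finset.sum_add_distrib, Finset.sum_add_distrib, Finset.sum_add_distrib,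
    sum_ite_card, sum_ite_card, sum_ite_card, sum_ite_card,
    card_count, card_count, card_count, card_count,
    card_univ, Fintype.card_fin,
    Finset.card_erase_of_mem (mem_univ i0), Finset.card_erase_of_mem (mem_univ i1),
    Finset.card_erase_of_mem (Finset.mem_erase.2 ⟨hne.symm, mem_univ i1⟩),
    Finset.card_erase_of_mem (mem_univ i0),
    card_univ, Fintype.card_fin]
  ring_nf
  congr 1

/-! ### Binomial facts -/

lemma pascal' (m j : ℕ) : (m+1).choose (j+1) = m.choose j + m.choose (j+1) :=
  Nat.choose_succ_succ m j

lemma choose_ne_aux (n k : ℕ) (hk0 : 0 < k) (hkn : k < n) (hne : n ≠ 2 * k) :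
    n.choose k ≠ 2 * (n - 1).choose k := by
  obtain ⟨m, rfl⟩ : ∃ m, n = m + 1 := ⟨n-1, by omega⟩
  obtain ⟨j, rfl⟩ : ∃ j, k = j + 1 := ⟨k-1, by omega⟩
  simp only [pascal', Nat.add_sub_cancel]
  intro h
  have heq : m.choose j = m.choose (j+1) := by omega
  have hid := Nat.choose_succ_right_eq m j
  rw [← heq] at hid
  have hpos : 0 < m.choose j := Nat.choose_pos (by omega)
  have : j + 1 = m - j := Nat.eq_of_mul_eq_mul_left hpos (by linarith [hid])
  omega

lemma choose_ne_aux2 (k : ℕ) (hk : 2 ≤ k) :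
    (2*k).choose k + 4 * (2*k-2).choose k ≠ 4 * (2*k-1).choose k := by
  obtain ⟨j, rfl⟩ : ∃ j, k = j + 2 := ⟨k-2, by omega⟩
  have e1 : 2*(j+2) = (2*j+3) + 1 := by ring
  have e2 : 2*(j+2) - 1 = 2*j+3 := by omega
  have e3 : 2*(j+2) - 2 = 2*j+2 := by omega
  have hA : (2*(j+2)).choose (j+2) = (2*j+3).choose (j+1) + (2*j+3).choose (j+2) := by
    rw [e1]; exact pascal' _ _
  have hsymm : (2*j+3).choose (j+1) = (2*j+3).choose (j+2) := by
    rw [show j+1 = (2*j+3) - (j+2) by omega]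
    exact Nat.choose_symm (by omega)
  have hB : (2*j+3).choose (j+2) = (2*j+2).choose (j+1) + (2*j+2).choose (j+2) := by
    rw [show 2*j+3 = (2*j+2)+1 by omega]; exact pascal' _ _
  have hne : (2*j+2).choose (j+1) ≠ (2*j+2).choose (j+2) := by
    intro h
    have hid := Nat.choose_succ_right_eq (2*j+2) (j+1)
    rw [← h] at hid
    have hpos : 0 < (2*j+2).choose (j+1) := Nat.choose_pos (by omega)
    have : j + 2 = (2*j+2) - (j+1) := Nat.eq_of_mul_eq_mul_left hpos (by linarith [hid])
    omega
  rw [e2, e3, hA, hB, hsymm, hB]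
  omega

/-! ### The all-`Z` context -/

lemma conj_xvec (b b' : Bool) : (starRingEnd ℂ) (xvec b b') = xvec b b' := by
  cases b <;> cases b' <;> simp [xvec]

lemma zamp {n k : ℕ} (z : Fin n → Bool) :
    inner' (tensor fun i => evec (z i)) (dicke n k) = dicke n k z := by
  unfold inner' tensor
  have h : ∀ s : Fin n → Bool, (starRingEnd ℂ) (∏ i, evec (z i) (s i)) * dicke n k s
      = if z = s then dicke n k s else 0 := by
    intro s
    rw [show (∏ i, evec (z i) (s i)) = ∏ i, if z i = s i then (1:ℂ) else 0 from rfl,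
      Finset.prod_boole]
    by_cases h : z = s
    · simp [h]
    · rw [if_neg, if_neg h]
      · simp
      · intro hall
        exact h (funext fun i => hall i (mem_univ i))
  rw [Finset.sum_congr rfl (fun s _ => h s), Finset.sum_ite_eq]
  simp

lemma fset_update_true {n : ℕ} (z : Fin n → Bool) (i : Fin n) (h : z i = false) :
    fset (Function.update z i true) = (fset z).erase i := by
  ext l
  by_cases hl : l = i
  · subst hl; simp [mem_fset, Function.update_self]
  · simp [mem_fset, Function.update_of_ne hl, Finset.mem_erase, hl]

lemma fset_update_false {n : ℕ} (z : Fin n → Bool) (i : Fin n) (h : z i = true) :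
    fset (Function.update z i false) = insert i (fset z) := by
  ext l
  by_cases hl : l = i
  · subst hl; simp [mem_fset, Function.update_self]
  · simp [mem_fset, Function.update_of_ne hl, Finset.mem_insert, hl]
lemma pair_constraint {n k : ℕ} (g : Fin n → M → Bool) (i j : Fin n) (hij : i ≠ j)
    (hzi : g i M.Z = false) (hzj : g j M.Z = true)
    (hcard : (fset (fun l => g l M.Z)).card = k)
    (hx : g i M.X ≠ g j M.X) :
    inner' (tensor fun l =>
      mvec ((Function.update (Function.update (fun _ => M.Z) i M.X) j M.X) l)
        (g l ((Function.update (Function.update (fun _ => M.Z) i M.X) j M.X) l)))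
      (dicke n k) = 0 := by
  set z : Fin n → Bool := fun l => g l M.Z with hz
  set c : Fin n → M := Function.update (Function.update (fun _ => M.Z) i M.X) j M.X with hc
  have hci : c i = M.X := by
    rw [hc, Function.update_of_ne hij, Function.update_self]
  have hcj : c j = M.X := by rw [hc, Function.update_self]
  have hcl : ∀ l, l ≠ i → l ≠ j → c l = M.Z := by
    intro l h1 h2
    rw [hc, Function.update_of_ne h2, Function.update_of_ne h1]
  have hzit : z i = false := hzi
  have hzjt : z j = true := hzj
  have hmem : i ∈ fset z := mem_fset.2 hzit
  have hjnot : j ∉ fset z := fun hm => by rw [mem_fset, hzjt] at hm; exact Bool.noConfusion hm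
  have hkpos : 0 < k := by
    rw [← hcard]
    exact Finset.card_pos.2 ⟨i, hmem⟩
  have hzj' : (Function.update z i true) j = true := by
    rw [Function.update_of_ne hij.symm]; exact hzjt
  -- the four configurations and their dicke values
  have hd1 : dicke n k z = (Real.sqrt (n.choose k) : ℂ)⁻¹ := by
    rw [dicke_apply, if_pos hcard]
  have hcard2 : (fset (Function.update (Function.update z i true) j false)).card = k := by
    rw [fset_update_false _ j hzj', fset_update_true z i hzit,
      Finset.card_insert_of_notMem (fun hm => hjnot (Finset.mem_of_mem_erase hm)),
      Finset.card_erase_of_mem hmem, hcard]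
    omega
  have hd2 : dicke n k (Function.update (Function.update z i true) j false)
      = (Real.sqrt (n.choose k) : ℂ)⁻¹ := by
    rw [dicke_apply, if_pos hcard2]
  have hd3 : dicke n k (Function.update z i true) = 0 := by
    rw [dicke_apply, if_neg]
    rw [fset_update_true z i hzit, Finset.card_erase_of_mem hmem, hcard]
    omega
  have hd4 : dicke n k (Function.update z j false) = 0 := by
    rw [dicke_apply, if_neg]
    rw [fset_update_false z j hzjt, Finset.card_insert_of_notMem hjnot, hcard]
    omega
  -- collapsing double updates
  have e5 : Function.update (Function.update z i true) j true = Function.update z i true := by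
    funext l
    by_cases h1 : l = j
    · subst h1; rw [Function.update_self, hzj']
    · rw [Function.update_of_ne h1]
  have e6 : Function.update (Function.update z i false) j false = Function.update z j false := by
    funext l
    by_cases h1 : l = j
    · subst h1; rw [Function.update_self, Function.update_self]
    · rw [Function.update_of_ne h1, Function.update_of_ne h1]
      by_cases h2 : l = i
      · subst h2; rw [Function.update_self, hzit]
      · rw [Function.update_of_ne h2]
  have e7 : Function.update (Function.update z i false) j true = z := by
    funext l
    by_cases h1 : l = j
    · subst h1; rw [Function.update_self, hzjt]
    · rw [Function.update_of_ne h1]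
      by_cases h2 : l = i
      · subst h2; rw [Function.update_self, hzit]
      · rw [Function.update_of_ne h2]
  -- the product decomposition
  have hprod : ∀ s : Fin n → Bool,
      (∏ l, mvec (c l) (g l (c l)) (s l))
        = xvec (g i M.X) (s i) * (xvec (g j M.X) (s j) *
            (if ∀ l ∈ (univ \ {i}) \ {j}, z l = s l then (1:ℂ) else 0)) := by
    intro s
    rw [Finset.prod_eq_mul_prod_sdiff_singleton_of_mem (mem_univ i)]
    have hjm : j ∈ univ \ {i} := by simp [hij.symm]
    rw [Finset.prod_eq_mul_prod_sdiff_singleton_of_mem hjm]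
    have h2 : ∀ l ∈ (univ \ {i}) \ {j}, mvec (c l) (g l (c l)) (s l)
        = if z l = s l then (1:ℂ) else 0 := by
      intro l hl
      simp only [mem_sdiff, mem_singleton, mem_univ, true_and] at hl
      rw [hcl l hl.1 hl.2]
      rfl
    rw [Finset.prod_congr rfl h2, Finset.prod_boole, hci, hcj]
    simp only [mvec]
    congr
  unfold inner' tensor
  -- involution flipping coordinates i and j
  refine Finset.sum_involution
    (fun s _ => Function.update (Function.update s i (!(s i))) j (!(s j))) ?_ ?_
    (fun _ _ => mem_univ _) ?_
  · -- main cancellation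
    intro s hsm
    beta_reduce
    set σs : Fin n → Bool := Function.update (Function.update s i (!(s i))) j (!(s j)) with hσ
    have hσi : σs i = !(s i) := by rw [hσ, Function.update_of_ne hij, Function.update_self]
    have hσj : σs j = !(s j) := by rw [hσ, Function.update_self]
    have hσl : ∀ l, l ≠ i → l ≠ j → σs l = s l := fun l h1 h2 => by
      rw [hσ, Function.update_of_ne h2, Function.update_of_ne h1]
    by_cases hQ : ∀ l ∈ (univ \ {i}) \ {j}, z l = s l
    · have hQσ : ∀ l ∈ (univ \ {i}) \ {j}, z l = σs l := by
        intro l hl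
        have hl' := hl
        simp only [mem_sdiff, mem_singleton, mem_univ, true_and] at hl'
        rw [hσl l hl'.1 hl'.2]
        exact hQ l hl
      have hs : s = Function.update (Function.update z i (s i)) j (s j) := by
        funext l
        by_cases h1 : l = j
        · subst h1; rw [Function.update_self]
        · rw [Function.update_of_ne h1]
          by_cases h2 : l = i
          · subst h2; rw [Function.update_self]
          · rw [Function.update_of_ne h2]
            exact (hQ l (by simp [h1, h2])).symm
      have hss : σs = Function.update (Function.update z i (!(s i))) j (!(s j)) := by
        funext l
        by_cases h1 : l = j
        · subst h1; rw [Function.update_self, hσj]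
        · rw [Function.update_of_ne h1]
          by_cases h2 : l = i
          · subst h2; rw [Function.update_self, hσi]
          · rw [Function.update_of_ne h2, hσl l h2 h1]
            exact (hQ l (by simp [h1, h2])).symm
      rw [hprod s, hprod σs, if_pos hQ, if_pos hQσ, hσi, hσj]
      cases hsi : s i <;> cases hsj : s j <;>
        rw [hsi, hsj] at hs hss <;>
        simp only [Bool.not_false, Bool.not_true] at hss ⊢
      · -- (false, false)
        rw [e6] at hs
        rw [e5] at hss
        rw [hs, hss, hd3, hd4]
        ring
      · -- (false, true) : s = z
        rw [e7] at hs
        rw [hs, hss, hd1, hd2]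
        rcases Bool.eq_false_or_eq_true (g i M.X) with hgi | hgi <;>
          rcases Bool.eq_false_or_eq_true (g j M.X) with hgj | hgj <;>
            rw [hgi, hgj] at hx ⊢ <;> first
          | exact absurd rfl hx
          | (simp only [xvec, Bool.and_false, Bool.and_true, Bool.false_and, Bool.true_and,
              if_true, if_false, Bool.false_eq_true, map_one, map_mul, map_neg, map_inv₀,
              Complex.conj_ofReal]; ring)
      · -- (true, false) : s = update (update z i true) j false
        rw [e7] at hss
        rw [hs, hss, hd1, hd2]
        rcases Bool.eq_false_or_eq_true (g i M.X) with hgi | hgi <;>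
          rcases Bool.eq_false_or_eq_true (g j M.X) with hgj | hgj <;>
            rw [hgi, hgj] at hx ⊢ <;> first
          | exact absurd rfl hx
          | (simp only [xvec, Bool.and_false, Bool.and_true, Bool.false_and, Bool.true_and,
              if_true, if_false, Bool.false_eq_true, map_one, map_mul, map_neg, map_inv₀,
              Complex.conj_ofReal]; ring)
      · -- (true, true)
        rw [e5] at hs
        rw [e6] at hss
        rw [hs, hss, hd3, hd4]
        ring
    · have hQσ : ¬ ∀ l ∈ (univ \ {i}) \ {j}, z l = σs l := by
        intro hall
        exact hQ fun l hl => by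
          have h1 := hall l hl
          simp only [mem_sdiff, mem_singleton, mem_univ, true_and] at hl
          rwa [hσl l hl.1 hl.2] at h1
      rw [hprod s, hprod σs, if_neg hQ, if_neg hQσ]
      simp
  · -- σ s ≠ s
    intro s _ _
    beta_reduce
    intro heq
    have h1 := congrFun heq i
    rw [Function.update_of_ne hij, Function.update_self] at h1
    exact Bool.not_ne_self (s i) h1
  · -- involutive
    intro s _
    beta_reduce
    set A : Fin n → Bool := Function.update (Function.update s i (!(s i))) j (!(s j)) with hA
    have hAi : A i = !(s i) := by rw [hA, Function.update_of_ne hij, Function.update_self]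
    have hAj : A j = !(s j) := by rw [hA, Function.update_self]
    funext l
    by_cases h1 : l = j
    · subst h1; rw [Function.update_self, hAj, Bool.not_not]
    · rw [Function.update_of_ne h1]
      by_cases h2 : l = i
      · subst h2; rw [Function.update_self, hAi, Bool.not_not]
      · rw [Function.update_of_ne h2, hA, Function.update_of_ne h1, Function.update_of_ne h2]

/-! ### Consistent global assignments have constant `X`-outcomes -/

lemma gx_const {n k : ℕ} (hk0 : 0 < k) (hkn : k < n) (g : Fin n → M → Bool)
    (h : ∀ c : Fin n → M,
      inner' (tensor fun i => mvec (c i) (g i (c i))) (dicke n k) ≠ 0) :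
    ∀ l l', g l M.X = g l' M.X := by
  set z : Fin n → Bool := fun l => g l M.Z with hz
  have h0 : dicke n k z ≠ 0 := by
    have h1 := h (fun _ => M.Z)
    rwa [show (tensor fun i => mvec ((fun _ => M.Z) i) (g i ((fun _ => M.Z) i)))
        = tensor fun i => evec (z i) from rfl, zamp] at h1
  have hcard : (fset z).card = k := by
    by_contra hc
    exact h0 (by rw [dicke_apply, if_neg hc])
  have hpair : ∀ a b : Fin n, g a M.Z = false → g b M.Z = true → g a M.X = g b M.X := by
    intro a b ha hb
    have hab : a ≠ b := fun e => by rw [e, hb] at ha; exact Bool.noConfusion ha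
    by_contra hxab
    exact h _ (pair_constraint g a b hab ha hb hcard hxab)
  -- there is a `false` site and a `true` site
  obtain ⟨i0, hi0⟩ : ∃ i0, z i0 = false := by
    have : (fset z).Nonempty := Finset.card_pos.1 (by omega)
    obtain ⟨i0, hi0⟩ := this
    exact ⟨i0, mem_fset.1 hi0⟩
  obtain ⟨i1, hi1⟩ : ∃ i1, z i1 = true := by
    by_contra hno
    push_neg at hno
    have : fset z = univ := by
      ext l
      simp only [mem_fset, mem_univ, iff_true]
      cases hl : z l
      · rfl
      · exact absurd hl (hno l)
    rw [this, card_univ, Fintype.card_fin] at hcard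
    omega
  have hall : ∀ l, g l M.X = g i1 M.X := by
    intro l
    cases hl : z l with
    | false => exact hpair l i1 hl hi1
    | true => exact (hpair i0 l hi0 hl).symm.trans (hpair i0 i1 hi0 hi1)
  intro l l'
  rw [hall l, hall l']

lemma c0_ne {n k : ℕ} (hkn : k ≤ n) : ((Real.sqrt (n.choose k) : ℂ))⁻¹ ≠ 0 := by
  have : (0:ℝ) < Real.sqrt (n.choose k) :=
    Real.sqrt_pos.2 (by exact_mod_cast Nat.choose_pos hkn)
  simp only [ne_eq, inv_eq_zero, Complex.ofReal_eq_zero]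
  exact ne_of_gt this

/-! ### Main theorem -/

/-- The empirical model of the Dicke state `S(n,k)` (`n > 2`, `0 < k < n`) with
`X`/`Z` measurements is logically contextual: some outcome is possible in the
all-`X` context, yet every consistent global assignment induces a different
outcome at the all-`X` context. -/
theorem dicke_logically_contextual (n k : ℕ) (hn : 2 < n) (hk0 : 0 < k) (hkn : k < n) :
    ∃ o : Fin n → Bool,
      inner' (tensor fun i => xvec (o i)) (dicke n k) ≠ 0 ∧
      ∀ g : Fin n → M → Bool,
        (∀ c : Fin n → M,
          inner' (tensor fun i => mvec (c i) (g i (c i))) (dicke n k) ≠ 0) →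
        (fun i => g i M.X) ≠ o := by
  have hc0 := c0_ne (le_of_lt hkn) (n := n) (k := k)
  by_cases hcase : n = 2 * k
  · -- use outcome with `true` exactly at positions 0, 1
    have hk2 : 2 ≤ k := by omega
    set i0 : Fin n := ⟨0, by omega⟩ with hi0
    set i1 : Fin n := ⟨1, by omega⟩ with hi1
    set i2 : Fin n := ⟨2, by omega⟩ with hi2
    have h01 : i0 ≠ i1 := by simp [hi0, hi1, Fin.ext_iff]
    refine ⟨fun i => decide (i = i0) || decide (i = i1), ?_, ?_⟩
    · rw [amp2 i0 i1 h01]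
      have hfac : rr^(n-2) * ((n.choose k : ℂ) * (rr * rr * (Real.sqrt (n.choose k) : ℂ)⁻¹)
          + ((n-1).choose k : ℂ) * ((-2*rr*rr) * (Real.sqrt (n.choose k) : ℂ)⁻¹)
          + ((n-1).choose k : ℂ) * ((-2*rr*rr) * (Real.sqrt (n.choose k) : ℂ)⁻¹)
          + ((n-2).choose k : ℂ) * ((4*rr*rr) * (Real.sqrt (n.choose k) : ℂ)⁻¹))
          = rr^(n-2) * (rr * rr * (Real.sqrt (n.choose k) : ℂ)⁻¹)
            * (((n.choose k : ℂ) + 4 * ((n-2).choose k : ℂ)) - 4 * ((n-1).choose k : ℂ)) := by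
        ring
      rw [hfac]
      refine mul_ne_zero (mul_ne_zero (pow_ne_zero _ rr_ne)
        (mul_ne_zero (mul_ne_zero rr_ne rr_ne) hc0)) ?_
      rw [sub_ne_zero]
      intro heq
      apply choose_ne_aux2 k hk2
      rw [← hcase]
      exact_mod_cast heq
    · intro g hg heq
      have hconst := gx_const hk0 hkn g hg
      have h1 := congrFun heq i0
      have h2 := congrFun heq i2
      simp only at h1 h2
      rw [hconst i0 i2, h2] at h1
      have e20 : i2 ≠ i0 := by simp [hi0, hi2, Fin.ext_iff]
      have e21 : i2 ≠ i1 := by simp [hi1, hi2, Fin.ext_iff]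
      simp [e20, e21] at h1
  · -- use outcome with `true` exactly at position 0
    set i0 : Fin n := ⟨0, by omega⟩ with hi0
    set i2 : Fin n := ⟨1, by omega⟩ with hi2
    refine ⟨fun i => decide (i = i0), ?_, ?_⟩
    · rw [amp1 i0]
      have hfac : rr^(n-1) * ((n.choose k : ℂ) * (rr * (Real.sqrt (n.choose k) : ℂ)⁻¹)
          + ((n-1).choose k : ℂ) * ((-2*rr) * (Real.sqrt (n.choose k) : ℂ)⁻¹))
          = rr^(n-1) * (rr * (Real.sqrt (n.choose k) : ℂ)⁻¹)
            * ((n.choose k : ℂ) - 2 * ((n-1).choose k : ℂ)) := by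
        ring
      rw [hfac]
      refine mul_ne_zero (mul_ne_zero (pow_ne_zero _ rr_ne) (mul_ne_zero rr_ne hc0)) ?_
      rw [sub_ne_zero]
      intro heq
      apply choose_ne_aux n k hk0 hkn hcase
      exact_mod_cast heq
    · intro g hg heq
      have hconst := gx_const hk0 hkn g hg
      have h1 := congrFun heq i0
      have h2 := congrFun heq i2
      simp only at h1 h2
      rw [hconst i0 i2, h2] at h1
      have e20 : i2 ≠ i0 := by simp [hi0, hi2, Fin.ext_iff]
      simp [e20] at h1
end
end
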